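/- The ROC curve of the likelihood-ratio-based diagnostic test satisfies ROC_opt(q) = 1 - φ(1 - q) for all q in (0,1), where φ(p) = H_Y(H_X^{-1}(p)) is the Cifarelli–Regazzini concentration function. -/
import Mathlib


open MeasureTheory Set

/-- The ROC curve of the likelihood-ratio-based diagnostic test
satisfies `ROC_opt(q) = 1 - φ(1-q)` with `φ(p) = H_Y(H_X⁻¹(p))`. -/
theorem stmt1
    {Ω : Type*} [MeasurableSpace Ω] (ℙ : Measure Ω) [IsProbabilityMeasure ℙ]
    (X Y : Ω → ℝ) (fX fY : ℝ → ℝ)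
    (hfX : ∀ x, 0 < fX x) (hfY : ∀ x, 0 < fY x)
    (hXmeas : Measurable X) (hYmeas : Measurable Y)
    (hf : Measurable fX) (hg : Measurable fY)
    (HX HY HinvX : ℝ → ℝ)
    (hHX : ∀ l, HX l = (ℙ {ω | fY (X ω) / fX (X ω) ≤ l}).toReal)
    (hHY : ∀ l, HY l = (ℙ {ω | fY (Y ω) / fX (Y ω) ≤ l}).toReal)
    (hinv : ∀ t ∈ Ioo (0:ℝ) 1, HX (HinvX t) = t)
    (φ ROCopt : ℝ → ℝ)
    (hφ : ∀ p ∈ Ioo (0:ℝ) 1, φ p = HY (HinvX p))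
    -- the ROC curve of the likelihood ratio test: at each threshold t,
    -- its value at the false positive rate equals the true positive rate
    (hROC : ∀ t ∈ Ioo (0:ℝ) 1,
      ROCopt ((ℙ {ω | HinvX t < fY (X ω) / fX (X ω)}).toReal)
        = (ℙ {ω | HinvX t < fY (Y ω) / fX (Y ω)}).toReal) :
    ∀ q ∈ Ioo (0:ℝ) 1, ROCopt q = 1 - φ (1 - q) := by
  intro q hq
  obtain ⟨hq0, hq1⟩ := hq
  have ht : (1 - q) ∈ Ioo (0:ℝ) 1 := ⟨by linarith, by linarith⟩
  set l := HinvX (1 - q) with hl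
  have hLX : Measurable fun ω => fY (X ω) / fX (X ω) :=
    (hg.comp hXmeas).div (hf.comp hXmeas)
  have hLY : Measurable fun ω => fY (Y ω) / fX (Y ω) :=
    (hg.comp hYmeas).div (hf.comp hYmeas)
  have key : ∀ (Z : Ω → ℝ), Measurable (fun ω => fY (Z ω) / fX (Z ω)) →
      (ℙ {ω | l < fY (Z ω) / fX (Z ω)}).toReal
        = 1 - (ℙ {ω | fY (Z ω) / fX (Z ω) ≤ l}).toReal := by
    intro Z hZ
    have hm : MeasurableSet {ω | fY (Z ω) / fX (Z ω) ≤ l} :=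
      measurableSet_le hZ measurable_const
    have hc : {ω | l < fY (Z ω) / fX (Z ω)} = {ω | fY (Z ω) / fX (Z ω) ≤ l}ᶜ := by
      ext ω; simp [not_le]
    rw [hc, prob_compl_eq_one_sub hm,
      ENNReal.toReal_sub_of_le prob_le_one ENNReal.one_ne_top, ENNReal.toReal_one]
  have hFPR : (ℙ {ω | l < fY (X ω) / fX (X ω)}).toReal = q := by
    rw [key X hLX, ← hHX, hinv _ ht]; ring
  have := hROC (1 - q) ht
  rw [← hl, hFPR, key Y hLY, ← hHY, ← hφ _ ht] at this
  exact this
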